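/- Let k, w ∈ ℤ and let f : ℍ → ℂ be smooth with Δ_w f = (k(1−k) + w(w−2)/4)·f. Then Δ_{w−2}(L_w f) = (k(1−k) + (w−2)(w−4)/4)·(L_w f). That is, the lowering operator L_w maps F_{k,w} into F_{k,w−2}. -/

import Mathlib

noncomputable section

open Complex Real

/-- The upper half-plane, as a subset of `ℂ`. -/
def UHP : Set ℂ := {z : ℂ | 0 < z.im}

/-- The Wirtinger derivative `∂f/∂τ = (1/2)(∂f/∂x − i ∂f/∂y)`. -/
def dtau (f : ℂ → ℂ) (z : ℂ) : ℂ := (fderiv ℝ f z 1 - I * fderiv ℝ f z I) / 2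

/-- The Wirtinger derivative `∂f/∂τ̄ = (1/2)(∂f/∂x + i ∂f/∂y)`. -/
def dtaubar (f : ℂ → ℂ) (z : ℂ) : ℂ := (fderiv ℝ f z 1 + I * fderiv ℝ f z I) / 2

/-- The raising operator `R_w f = (1/(2πi)) (∂f/∂τ + w f/(τ − τ̄))`. -/
def Rop (w : ℤ) (f : ℂ → ℂ) : ℂ → ℂ :=
  fun z => (1 / (2 * (π : ℂ) * I)) * (dtau f z + (w : ℂ) * f z / (z - (starRingEnd ℂ) z))

/-- The lowering operator `L_w f = (1/(2πi)) (τ − τ̄)² ∂f/∂τ̄`. -/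
def Lop (_w : ℤ) (f : ℂ → ℂ) : ℂ → ℂ :=
  fun z => (1 / (2 * (π : ℂ) * I)) * (z - (starRingEnd ℂ) z) ^ 2 * dtaubar f z

/-- The weight-`w` Laplacian `Δ_w f = (τ−τ̄)² ∂²f/∂τ∂τ̄ + w(τ−τ̄) ∂f/∂τ̄`. -/
def DeltaOp (w : ℤ) (f : ℂ → ℂ) : ℂ → ℂ :=
  fun z => (z - (starRingEnd ℂ) z) ^ 2 * dtau (dtaubar f) z
    + (w : ℂ) * (z - (starRingEnd ℂ) z) * dtaubar f z

/- ## Auxiliary lemmas -/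

lemma isOpen_UHP : IsOpen UHP :=
  isOpen_lt continuous_const Complex.continuous_im

lemma hasFDerivAt_usub (τ : ℂ) : HasFDerivAt (fun z : ℂ => z - (starRingEnd ℂ) z)
    (ContinuousLinearMap.id ℝ ℂ - (Complex.conjCLE : ℂ ≃L[ℝ] ℂ).toContinuousLinearMap) τ :=
  (hasFDerivAt_id τ).sub (Complex.conjCLE.hasFDerivAt)

lemma diffAt_usub (τ : ℂ) : DifferentiableAt ℝ (fun z : ℂ => z - (starRingEnd ℂ) z) τ :=
  (hasFDerivAt_usub τ).differentiableAt

lemma dtau_usub (τ : ℂ) : dtau (fun z : ℂ => z - (starRingEnd ℂ) z) τ = 1 := by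
  unfold dtau
  rw [(hasFDerivAt_usub τ).fderiv]
  simp [Complex.conj_I]
  ring_nf
  simp [Complex.I_sq]

lemma dtaubar_usub (τ : ℂ) : dtaubar (fun z : ℂ => z - (starRingEnd ℂ) z) τ = -1 := by
  unfold dtaubar
  rw [(hasFDerivAt_usub τ).fderiv]
  simp [Complex.conj_I]
  ring_nf
  simp [Complex.I_sq]

lemma dtau_congr {f g : ℂ → ℂ} {τ : ℂ} (h : f =ᶠ[nhds τ] g) : dtau f τ = dtau g τ := by
  unfold dtau; rw [h.fderiv_eq]

lemma dtaubar_congr {f g : ℂ → ℂ} {τ : ℂ} (h : f =ᶠ[nhds τ] g) : dtaubar f τ = dtaubar g τ := by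
  unfold dtaubar; rw [h.fderiv_eq]

lemma dtau_add {F G : ℂ → ℂ} {τ : ℂ} (hF : DifferentiableAt ℝ F τ)
    (hG : DifferentiableAt ℝ G τ) :
    dtau (fun z => F z + G z) τ = dtau F τ + dtau G τ := by
  unfold dtau
  rw [fderiv_fun_add hF hG]
  simp only [ContinuousLinearMap.add_apply]
  ring

lemma dtaubar_add {F G : ℂ → ℂ} {τ : ℂ} (hF : DifferentiableAt ℝ F τ)
    (hG : DifferentiableAt ℝ G τ) :
    dtaubar (fun z => F z + G z) τ = dtaubar F τ + dtaubar G τ := by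
  unfold dtaubar
  rw [fderiv_fun_add hF hG]
  simp only [ContinuousLinearMap.add_apply]
  ring

lemma dtau_mul {F G : ℂ → ℂ} {τ : ℂ} (hF : DifferentiableAt ℝ F τ)
    (hG : DifferentiableAt ℝ G τ) :
    dtau (fun z => F z * G z) τ = dtau F τ * G τ + F τ * dtau G τ := by
  unfold dtau
  rw [fderiv_fun_mul hF hG]
  simp only [ContinuousLinearMap.add_apply, ContinuousLinearMap.smul_apply,
    ContinuousLinearMap.smulRight_apply, smul_eq_mul]
  ring

lemma dtaubar_mul {F G : ℂ → ℂ} {τ : ℂ} (hF : DifferentiableAt ℝ F τ)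
    (hG : DifferentiableAt ℝ G τ) :
    dtaubar (fun z => F z * G z) τ = dtaubar F τ * G τ + F τ * dtaubar G τ := by
  unfold dtaubar
  rw [fderiv_fun_mul hF hG]
  simp only [ContinuousLinearMap.add_apply, ContinuousLinearMap.smul_apply,
    ContinuousLinearMap.smulRight_apply, smul_eq_mul]
  ring

lemma dtau_const_mul (c : ℂ) {G : ℂ → ℂ} {τ : ℂ} (hG : DifferentiableAt ℝ G τ) :
    dtau (fun z => c * G z) τ = c * dtau G τ := by
  have h := dtau_mul (F := fun _ => c) (G := G) (differentiableAt_const c) hG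
  have hc : dtau (fun _ : ℂ => c) τ = 0 := by
    unfold dtau; rw [fderiv_fun_const]; simp
  rw [h, hc]; ring

lemma dtaubar_const_mul (c : ℂ) {G : ℂ → ℂ} {τ : ℂ} (hG : DifferentiableAt ℝ G τ) :
    dtaubar (fun z => c * G z) τ = c * dtaubar G τ := by
  have h := dtaubar_mul (F := fun _ => c) (G := G) (differentiableAt_const c) hG
  have hc : dtaubar (fun _ : ℂ => c) τ = 0 := by
    unfold dtaubar; rw [fderiv_fun_const]; simp
  rw [h, hc]; ring
lemma contDiffOn_fderiv_apply {f : ℂ → ℂ} (hf : ContDiffOn ℝ (⊤ : ℕ∞) f UHP) (v : ℂ) :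
    ContDiffOn ℝ (⊤ : ℕ∞) (fun z => fderiv ℝ f z v) UHP := by
  have hD : ContDiffOn ℝ (⊤ : ℕ∞) (fun z => fderiv ℝ f z) UHP :=
    hf.fderiv_of_isOpen isOpen_UHP (by simp)
  exact hD.clm_apply contDiffOn_const

lemma contDiffOn_dtau {f : ℂ → ℂ} (hf : ContDiffOn ℝ (⊤ : ℕ∞) f UHP) :
    ContDiffOn ℝ (⊤ : ℕ∞) (dtau f) UHP := by
  have h1 := contDiffOn_fderiv_apply hf 1
  have hI := contDiffOn_fderiv_apply hf I
  exact ((h1.sub (contDiffOn_const.mul hI)).div_const 2)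

lemma contDiffOn_dtaubar {f : ℂ → ℂ} (hf : ContDiffOn ℝ (⊤ : ℕ∞) f UHP) :
    ContDiffOn ℝ (⊤ : ℕ∞) (dtaubar f) UHP := by
  have h1 := contDiffOn_fderiv_apply hf 1
  have hI := contDiffOn_fderiv_apply hf I
  exact ((h1.add (contDiffOn_const.mul hI)).div_const 2)

lemma diffAt_of_smooth {f : ℂ → ℂ} (hf : ContDiffOn ℝ (⊤ : ℕ∞) f UHP) {τ : ℂ} (hτ : τ ∈ UHP) :
    DifferentiableAt ℝ f τ :=
  (hf.differentiableOn (by simp)).differentiableAt (isOpen_UHP.mem_nhds hτ)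
lemma fderiv_apply_swap {g : ℂ → ℂ} {τ : ℂ} (hD : DifferentiableAt ℝ (fderiv ℝ g) τ)
    (v w : ℂ) :
    fderiv ℝ (fun z => fderiv ℝ g z v) τ w = fderiv ℝ (fderiv ℝ g) τ w v := by
  rw [fderiv_clm_apply hD (differentiableAt_const v)]
  simp

lemma fderiv_comb {A B : ℂ → ℂ} {τ w : ℂ} (hA : DifferentiableAt ℝ A τ)
    (hB : DifferentiableAt ℝ B τ) (c : ℂ) :
    fderiv ℝ (fun z => (A z + c * B z) / 2) τ w
      = (fderiv ℝ A τ w + c * fderiv ℝ B τ w) / 2 := by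
  have e : (fun z => (A z + c * B z) / 2) = fun z => (2⁻¹ : ℂ) * (A z + c * B z) := by
    funext z; ring
  rw [e, fderiv_const_mul (a := fun z => A z + c * B z) (hA.add (hB.const_mul c)), fderiv_fun_add hA (hB.const_mul c),
    fderiv_const_mul hB c]
  simp only [ContinuousLinearMap.smul_apply, ContinuousLinearMap.add_apply, smul_eq_mul]
  ring

lemma dtau_dtaubar_comm {g : ℂ → ℂ} (hg : ContDiffOn ℝ (⊤ : ℕ∞) g UHP) {τ : ℂ} (hτ : τ ∈ UHP) :
    dtau (dtaubar g) τ = dtaubar (dtau g) τ := by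
  have hA : DifferentiableAt ℝ (fun z => fderiv ℝ g z 1) τ :=
    diffAt_of_smooth (contDiffOn_fderiv_apply hg 1) hτ
  have hB : DifferentiableAt ℝ (fun z => fderiv ℝ g z I) τ :=
    diffAt_of_smooth (contDiffOn_fderiv_apply hg I) hτ
  have hD : DifferentiableAt ℝ (fderiv ℝ g) τ :=
    (((hg.fderiv_of_isOpen (m := (⊤ : ℕ∞)) isOpen_UHP (by simp)).differentiableOn
      (by simp)).differentiableAt (isOpen_UHP.mem_nhds hτ))
  have hsymm : fderiv ℝ (fderiv ℝ g) τ 1 I = fderiv ℝ (fderiv ℝ g) τ I 1 :=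
    ((hg.contDiffAt (isOpen_UHP.mem_nhds hτ)).isSymmSndFDerivAt (by rw [minSmoothness_of_isRCLikeNormedField]; exact WithTop.coe_le_coe.mpr (le_top : (2 : ℕ∞) ≤ ⊤))) 1 I
  have e1 : dtaubar g = fun z => ((fun z => fderiv ℝ g z 1) z
      + I * (fun z => fderiv ℝ g z I) z) / 2 := rfl
  have e2 : dtau g = fun z => ((fun z => fderiv ℝ g z 1) z
      + (-I) * (fun z => fderiv ℝ g z I) z) / 2 := by
    funext z; simp only [dtau]; ring
  have F1 : ∀ w, fderiv ℝ (dtaubar g) τ w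
      = (fderiv ℝ (fun z => fderiv ℝ g z 1) τ w + I * fderiv ℝ (fun z => fderiv ℝ g z I) τ w) / 2 := by
    intro w
    conv_lhs => rw [e1]
    exact fderiv_comb hA hB I
  have F2 : ∀ w, fderiv ℝ (dtau g) τ w
      = (fderiv ℝ (fun z => fderiv ℝ g z 1) τ w + (-I) * fderiv ℝ (fun z => fderiv ℝ g z I) τ w) / 2 := by
    intro w
    conv_lhs => rw [e2]
    exact fderiv_comb hA hB (-I)
  have goal_lhs : dtau (dtaubar g) τ
      = (fderiv ℝ (dtaubar g) τ 1 - I * fderiv ℝ (dtaubar g) τ I) / 2 := rfl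
  have goal_rhs : dtaubar (dtau g) τ
      = (fderiv ℝ (dtau g) τ 1 + I * fderiv ℝ (dtau g) τ I) / 2 := rfl
  rw [goal_lhs, goal_rhs, F1 1, F1 I, F2 1, F2 I,
    fderiv_apply_swap hD 1 1, fderiv_apply_swap hD I 1,
    fderiv_apply_swap hD 1 I, fderiv_apply_swap hD I I]
  linear_combination (I / 2) * hsymm
lemma dtau_umul (d : ℂ) {G : ℂ → ℂ} {τ : ℂ} (hG : DifferentiableAt ℝ G τ) :
    dtau (fun z => d * (z - (starRingEnd ℂ) z) * G z) τ
      = d * G τ + d * (τ - (starRingEnd ℂ) τ) * dtau G τ := by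
  have e : (fun z => d * (z - (starRingEnd ℂ) z) * G z)
      = fun z => d * ((z - (starRingEnd ℂ) z) * G z) := by funext z; ring
  have h1 := dtau_mul (F := fun z => z - (starRingEnd ℂ) z) (G := G) (diffAt_usub τ) hG
  rw [e, dtau_const_mul d (G := fun z => (z - (starRingEnd ℂ) z) * G z) ((diffAt_usub τ).mul hG), h1, dtau_usub]
  ring

lemma dtaubar_umul (d : ℂ) {G : ℂ → ℂ} {τ : ℂ} (hG : DifferentiableAt ℝ G τ) :
    dtaubar (fun z => d * (z - (starRingEnd ℂ) z) * G z) τ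
      = -(d * G τ) + d * (τ - (starRingEnd ℂ) τ) * dtaubar G τ := by
  have e : (fun z => d * (z - (starRingEnd ℂ) z) * G z)
      = fun z => d * ((z - (starRingEnd ℂ) z) * G z) := by funext z; ring
  have h1 := dtaubar_mul (F := fun z => z - (starRingEnd ℂ) z) (G := G) (diffAt_usub τ) hG
  rw [e, dtaubar_const_mul d (G := fun z => (z - (starRingEnd ℂ) z) * G z) ((diffAt_usub τ).mul hG), h1, dtaubar_usub]
  ring

lemma dtau_u2mul (d : ℂ) {G : ℂ → ℂ} {τ : ℂ} (hG : DifferentiableAt ℝ G τ) :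
    dtau (fun z => d * (z - (starRingEnd ℂ) z) ^ 2 * G z) τ
      = 2 * d * (τ - (starRingEnd ℂ) τ) * G τ
        + d * (τ - (starRingEnd ℂ) τ) ^ 2 * dtau G τ := by
  have e : (fun z => d * (z - (starRingEnd ℂ) z) ^ 2 * G z)
      = fun z => d * (z - (starRingEnd ℂ) z) * ((z - (starRingEnd ℂ) z) * G z) := by
    funext z; ring
  rw [e, dtau_umul d (G := fun z => (z - (starRingEnd ℂ) z) * G z) ((diffAt_usub τ).mul hG),
    dtau_mul (F := fun z => z - (starRingEnd ℂ) z) (G := G) (diffAt_usub τ) hG, dtau_usub]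
  ring

lemma dtaubar_u2mul (d : ℂ) {G : ℂ → ℂ} {τ : ℂ} (hG : DifferentiableAt ℝ G τ) :
    dtaubar (fun z => d * (z - (starRingEnd ℂ) z) ^ 2 * G z) τ
      = -(2 * d * (τ - (starRingEnd ℂ) τ) * G τ)
        + d * (τ - (starRingEnd ℂ) τ) ^ 2 * dtaubar G τ := by
  have e : (fun z => d * (z - (starRingEnd ℂ) z) ^ 2 * G z)
      = fun z => d * (z - (starRingEnd ℂ) z) * ((z - (starRingEnd ℂ) z) * G z) := by
    funext z; ring
  rw [e, dtaubar_umul d (G := fun z => (z - (starRingEnd ℂ) z) * G z) ((diffAt_usub τ).mul hG),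
    dtaubar_mul (F := fun z => z - (starRingEnd ℂ) z) (G := G) (diffAt_usub τ) hG, dtaubar_usub]
  ring

lemma dtau_combo (a b : ℂ) {G H : ℂ → ℂ} {τ : ℂ} (hG : DifferentiableAt ℝ G τ)
    (hH : DifferentiableAt ℝ H τ) :
    dtau (fun z => a * (z - (starRingEnd ℂ) z) ^ 2 * G z
        + b * (z - (starRingEnd ℂ) z) * H z) τ
      = (2 * a * (τ - (starRingEnd ℂ) τ) * G τ + a * (τ - (starRingEnd ℂ) τ) ^ 2 * dtau G τ)
        + (b * H τ + b * (τ - (starRingEnd ℂ) τ) * dtau H τ) := by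
  rw [dtau_add (F := fun z => a * (z - (starRingEnd ℂ) z) ^ 2 * G z)
      (G := fun z => b * (z - (starRingEnd ℂ) z) * H z)
      ((differentiableAt_const a |>.mul ((diffAt_usub τ).pow 2)).mul hG)
      ((differentiableAt_const b |>.mul (diffAt_usub τ)).mul hH),
    dtau_u2mul a hG, dtau_umul b hH]

lemma dtaubar_combo (a b : ℂ) {G H : ℂ → ℂ} {τ : ℂ} (hG : DifferentiableAt ℝ G τ)
    (hH : DifferentiableAt ℝ H τ) :
    dtaubar (fun z => a * (z - (starRingEnd ℂ) z) ^ 2 * G z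
        + b * (z - (starRingEnd ℂ) z) * H z) τ
      = (-(2 * a * (τ - (starRingEnd ℂ) τ) * G τ) + a * (τ - (starRingEnd ℂ) τ) ^ 2 * dtaubar G τ)
        + (-(b * H τ) + b * (τ - (starRingEnd ℂ) τ) * dtaubar H τ) := by
  rw [dtaubar_add (F := fun z => a * (z - (starRingEnd ℂ) z) ^ 2 * G z)
      (G := fun z => b * (z - (starRingEnd ℂ) z) * H z)
      ((differentiableAt_const a |>.mul ((diffAt_usub τ).pow 2)).mul hG)
      ((differentiableAt_const b |>.mul (diffAt_usub τ)).mul hH),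
    dtaubar_u2mul a hG, dtaubar_umul b hH]
/-- the lowering operator `L_w` maps `F_{k,w}` into `F_{k,w−2}`:
if `Δ_w f = (k(1−k) + w(w−2)/4) f` on `ℍ` then
`Δ_{w−2}(L_w f) = (k(1−k) + (w−2)(w−4)/4) (L_w f)` on `ℍ`. -/
theorem stmt5 (k w : ℤ) (f : ℂ → ℂ) (hf : ContDiffOn ℝ (⊤ : ℕ∞) f UHP)
    (heig : ∀ τ ∈ UHP,
      DeltaOp w f τ = (((k * (1 - k) : ℤ) : ℂ) + ((w * (w - 2) : ℤ) : ℂ) / 4) * f τ) :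
    ∀ τ ∈ UHP,
      DeltaOp (w - 2) (Lop w f) τ
        = (((k * (1 - k) : ℤ) : ℂ) + (((w - 2) * (w - 4) : ℤ) : ℂ) / 4) * Lop w f τ := by
  intro τ hτ
  set c : ℂ := 1 / (2 * (π : ℂ) * I) with hc
  set g : ℂ → ℂ := dtaubar f with hgdef
  set p : ℂ → ℂ := dtaubar g with hpdef
  set h : ℂ → ℂ := dtau g with hhdef
  set lam : ℂ := ((k * (1 - k) : ℤ) : ℂ) + ((w * (w - 2) : ℤ) : ℂ) / 4 with hlam
  have hg : ContDiffOn ℝ (⊤ : ℕ∞) g UHP := contDiffOn_dtaubar hf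
  have hp : ContDiffOn ℝ (⊤ : ℕ∞) p UHP := contDiffOn_dtaubar hg
  have hh : ContDiffOn ℝ (⊤ : ℕ∞) h UHP := contDiffOn_dtau hg
  have hgd : DifferentiableAt ℝ g τ := diffAt_of_smooth hg hτ
  have hpd : DifferentiableAt ℝ p τ := diffAt_of_smooth hp hτ
  have hhd : DifferentiableAt ℝ h τ := diffAt_of_smooth hh hτ
  -- Step 1: the ∂τ̄-derivative of `Lop w f` on UHP
  have eL : Lop w f = fun z => c * (z - (starRingEnd ℂ) z) ^ 2 * g z := rfl
  have step1 : ∀ σ ∈ UHP, dtaubar (Lop w f) σ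
      = c * (σ - (starRingEnd ℂ) σ) ^ 2 * p σ
        + (-(2 * c)) * (σ - (starRingEnd ℂ) σ) * g σ := by
    intro σ hσ
    rw [eL, dtaubar_u2mul c (diffAt_of_smooth hg hσ)]
    have : dtaubar g σ = p σ := rfl
    rw [this]; ring
  -- Step 2: the ∂τ∂τ̄-derivative of `Lop w f` at τ
  have ev : dtaubar (Lop w f) =ᶠ[nhds τ]
      (fun z => c * (z - (starRingEnd ℂ) z) ^ 2 * p z
        + (-(2 * c)) * (z - (starRingEnd ℂ) z) * g z) := by
    filter_upwards [isOpen_UHP.mem_nhds hτ] with σ hσ using step1 σ hσ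
  have step2 : dtau (dtaubar (Lop w f)) τ
      = (2 * c * (τ - (starRingEnd ℂ) τ) * p τ
          + c * (τ - (starRingEnd ℂ) τ) ^ 2 * dtau p τ)
        + ((-(2 * c)) * g τ + (-(2 * c)) * (τ - (starRingEnd ℂ) τ) * h τ) := by
    rw [dtau_congr ev, dtau_combo c (-(2 * c)) hpd hgd]
  -- Step 3: commuting the mixed derivatives
  have step3 : dtau p τ = dtaubar h τ := dtau_dtaubar_comm hg hτ
  -- Step 4: differentiate the eigenvalue equation
  have eD : DeltaOp w f = fun z => (1 : ℂ) * (z - (starRingEnd ℂ) z) ^ 2 * h z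
      + (w : ℂ) * (z - (starRingEnd ℂ) z) * g z := by
    funext z; simp only [DeltaOp]; ring
  have ev2 : DeltaOp w f =ᶠ[nhds τ] fun z => lam * f z := by
    filter_upwards [isOpen_UHP.mem_nhds hτ] with σ hσ using heig σ hσ
  have E4 : (-(2 * (1 : ℂ) * (τ - (starRingEnd ℂ) τ) * h τ)
        + (1 : ℂ) * (τ - (starRingEnd ℂ) τ) ^ 2 * dtaubar h τ)
      + (-((w : ℂ) * g τ) + (w : ℂ) * (τ - (starRingEnd ℂ) τ) * p τ) = lam * g τ := by
    have l1 : dtaubar (DeltaOp w f) τ = lam * g τ := by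
      rw [dtaubar_congr ev2, dtaubar_const_mul lam (diffAt_of_smooth hf hτ)]
    have l2 := dtaubar_combo (1 : ℂ) (w : ℂ) hhd hgd
    rw [eD] at l1
    rw [l2] at l1
    have e1 : dtaubar g τ = p τ := rfl
    rw [e1] at l1
    exact l1
  -- Final assembly
  show (τ - (starRingEnd ℂ) τ) ^ 2 * dtau (dtaubar (Lop w f)) τ
      + ((w - 2 : ℤ) : ℂ) * (τ - (starRingEnd ℂ) τ) * dtaubar (Lop w f) τ
    = (((k * (1 - k) : ℤ) : ℂ) + (((w - 2) * (w - 4) : ℤ) : ℂ) / 4)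
        * (c * (τ - (starRingEnd ℂ) τ) ^ 2 * g τ)
  rw [step2, step1 τ hτ, step3]
  rw [hlam] at E4
  push_cast at E4 ⊢
  linear_combination (c * (τ - (starRingEnd ℂ) τ) ^ 2) * E4
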